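/- Let $m$ be a nonnegative integer, $\lambda \in \mathbb{C}\setminus\mathbb{Z}$, and $a_n = \binom{n+\lambda}{m}$. Let $d_n^{(k)} = \det(a_{i+j+k-2})_{1 \le i,j \le n}$. Then for every $k \ge 0$, $d_{m+1}^{(k)} = (-1)^{\binom{m+1}{2}}$. -/

import Mathlib

/-!
By the Vandermonde convolution `C(x + y, m) = ∑ₜ C(x, t) C(y, m - t)`, the Hankel matrix
`(C(i + j + k + λ, m))ᵢⱼ` factors as `A * B` with `Aᵢₜ = C(i + k + λ, t)` and `Bₜⱼ = C(j, m - t)`.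
Scaling column `t` of `A` by `t!` turns it into the Vandermonde matrix of the consecutive nodes
`i + k + λ`, whose determinant is the superfactorial `∏ₜ t!`, so `det A = 1`. The matrix `B` is the
unitriangular Pascal matrix with its rows reversed, so `det B` is the sign `(-1)^C(m+1, 2)` of the
reversal permutation.
-/

open Finset

/-- Generalized binomial coefficient `z choose m` for complex `z`. -/
noncomputable def cchoose (z : ℂ) (m : ℕ) : ℂ :=
  (∏ s ∈ Finset.range m, (z - s)) / (m.factorial : ℂ)

open Equiv in
theorem Fin.sign_revPerm (n : ℕ) :
    Perm.sign (Fin.revPerm : Perm (Fin n)) = (-1) ^ n.choose 2 := by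
  induction n with
  | zero => rfl
  | succ n ih =>
    have h : (Fin.revPerm : Perm (Fin (n + 1))) =
        (finRotate (n + 1)).symm * Perm.decomposeFin.symm (0, Fin.revPerm) := by
      refine Equiv.ext fun x => ?_
      rw [Perm.mul_apply, eq_comm, Equiv.symm_apply_eq]
      cases x using Fin.cases with
      | zero => simp
      | succ i => simp [Fin.rev_succ]
    rw [h, Perm.sign_mul, Perm.sign_symm, sign_finRotate, Perm.decomposeFin.symm_sign, ih,
      Nat.choose_succ_succ', Nat.choose_one_right]
    simp [pow_add]

theorem Matrix.det_of_choose_sub_eq_neg_one_pow {R : Type*} [CommRing R] (m : ℕ) :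
    (Matrix.of fun t j : Fin (m + 1) => ((j : ℕ).choose (m - t) : R)).det =
      (-1) ^ (m + 1).choose 2 := by
  have h : (Matrix.of fun t j : Fin (m + 1) => ((j : ℕ).choose (m - t) : R)) =
      (Matrix.of fun s j : Fin (m + 1) => ((j : ℕ).choose s : R)).submatrix Fin.revPerm id := by
    ext t j
    simp [Fin.val_rev]
  rw [h, Matrix.det_permute, Fin.sign_revPerm, Matrix.det_of_isUpperTriangular]
  · simp
  · intro s j hjs
    simp [Nat.choose_eq_zero_of_lt (show (j : ℕ) < s from hjs)]

theorem Matrix.of_choose_add_eq_mul {R ι κ : Type*} [CommRing R] [BinomialRing R]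
    (x : ι → R) (y : κ → R) (m : ℕ) :
    Matrix.of (fun i j => Ring.choose (x i + y j) m) =
      Matrix.of (fun i (t : Fin (m + 1)) => Ring.choose (x i) t) *
        Matrix.of (fun (t : Fin (m + 1)) j => Ring.choose (y j) (m - t)) := by
  ext i j
  rw [Matrix.of_apply, Ring.add_choose_eq m (Commute.all _ _),
    Nat.sum_antidiagonal_eq_sum_range_succ_mk, ← Fin.sum_univ_eq_sum_range, Matrix.mul_apply]
  rfl

section CharZero

variable {K : Type*} [Field K] [CharZero K]

theorem Ring.choose_eq_inv_factorial_mul_descPochhammer_eval (a : K) (n : ℕ) :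
    Ring.choose a n = (n.factorial : K)⁻¹ * (descPochhammer K n).eval a := by
  rw [Ring.choose_eq_smul, smul_eq_mul, ← Polynomial.aeval_eq_smeval, Polynomial.aeval_def,
    ← Polynomial.eval_map, descPochhammer_map]

theorem Matrix.det_of_choose_eq_inv_mul_det_vandermonde {n : ℕ} (v : Fin n → K) :
    (Matrix.of fun i j : Fin n => Ring.choose (v i) j).det =
      (∏ j : Fin n, ((j : ℕ).factorial : K))⁻¹ * (Matrix.vandermonde v).det := by
  simp_rw [Ring.choose_eq_inv_factorial_mul_descPochhammer_eval]
  have h := Matrix.det_mul_row (fun j : Fin n => ((j : ℕ).factorial : K)⁻¹)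
    (Matrix.of fun i j : Fin n => (descPochhammer K j).eval (v i))
  simp only [Matrix.of_apply] at h
  rw [h, Matrix.det_eval_matrixOfPolynomials_eq_det_vandermonde v
    (fun j => descPochhammer K j) (fun j => descPochhammer_natDegree K j)
    (fun j => monic_descPochhammer K j), Finset.prod_inv_distrib]

theorem Matrix.det_of_choose_natCast_add_eq_one (n : ℕ) (c : K) :
    (Matrix.of fun i j : Fin (n + 1) => Ring.choose ((i : K) + c) j).det = 1 := by
  rw [Matrix.det_of_choose_eq_inv_mul_det_vandermonde, Matrix.det_vandermonde_add,
    det_vandermonde_id_eq_superFactorial,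
    inv_mul_eq_one₀ (by simp [Finset.prod_ne_zero_iff, Nat.factorial_ne_zero]),
    Fin.prod_univ_eq_prod_range (fun j => (j.factorial : K)), ← Nat.cast_prod,
    Nat.prod_range_succ_factorial]

end CharZero

theorem cchoose_eq_ringChoose (z : ℂ) (m : ℕ) : cchoose z m = Ring.choose z m := by
  rw [cchoose, Ring.choose_eq_inv_factorial_mul_descPochhammer_eval,
    descPochhammer_eval_eq_prod_range, div_eq_inv_mul]

theorem stmt17_general (m : ℕ) (lam : ℂ) (k : ℕ) :
    (Matrix.of fun i j : Fin (m + 1) =>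
        cchoose ((((i : ℕ) + (j : ℕ) + k : ℕ) : ℂ) + lam) m).det =
      (-1) ^ ((m + 1).choose 2) := by
  have hankel : (Matrix.of fun i j : Fin (m + 1) =>
        cchoose ((((i : ℕ) + (j : ℕ) + k : ℕ) : ℂ) + lam) m) =
      Matrix.of (fun i j : Fin (m + 1) => Ring.choose (((i : ℕ) : ℂ) + (k + lam)) j) *
        Matrix.of (fun t j : Fin (m + 1) => ((j : ℕ).choose (m - t) : ℂ)) := by
    simp_rw [← Ring.choose_natCast (R := ℂ), ← Matrix.of_choose_add_eq_mul, cchoose_eq_ringChoose]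
    congr! 3
    push_cast
    congr 1
    ring
  rw [hankel, Matrix.det_mul, Matrix.det_of_choose_natCast_add_eq_one,
    Matrix.det_of_choose_sub_eq_neg_one_pow, one_mul]

theorem stmt17 (m : ℕ) (lam : ℂ) (hlam : ∀ z : ℤ, lam ≠ z) (k : ℕ) :
    (Matrix.of fun i j : Fin (m + 1) =>
        cchoose ((((i : ℕ) + (j : ℕ) + k : ℕ) : ℂ) + lam) m).det =
      (-1) ^ ((m + 1).choose 2) :=
  stmt17_general m lam k
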